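/- Let U ⊆ ℝⁿ be open, let φ : U → ℝ be smooth with Hessian matrix G(x) invertible at every x ∈ U, set H(x) := G(x)⁻¹, and let a, α, b ∈ ℝⁿ with ⟨α,b⟩ = 1. Assume that for every x ∈ U, −Σ_{i,j} ∂_{x_i}(H_{ij}(x) b_j) + 2 Σ_{i,j} a_i H_{ij}(x) b_j = 2⟨x,b⟩. Then the smooth complex-valued function v(x,t) = (⟨x,b⟩ + 1) · exp(−⟨α, ∇φ(x)⟩ − √−1 ⟨α,t⟩) on U × ℝⁿ satisfies 𝔏v = (2 − 4⟨α,a⟩) v, where (𝔏v)(x,t) = −Σ_{i,j} ∂_{x_i}(H_{ij} ∂_{x_j} v) − Σ_{i,j} G_{ij}(x) ∂_{t_i}∂_{t_j} v + 2 Σ_{i,j} a_i H_{ij}(x) ∂_{x_j} v − 2√−1 Σ_j a_j ∂_{t_j} v. -/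

import Mathlib

open Complex Finset
namespace Stmt4Aux

variable {n : ℕ}

noncomputable def lin (c : Fin n → ℝ) : (Fin n → ℝ) →L[ℝ] ℝ :=
  ∑ i, c i • ContinuousLinearMap.proj i

@[simp] lemma lin_apply (c x : Fin n → ℝ) : lin c x = ∑ i, c i * x i := by
  simp [lin]

@[simp] lemma lin_single (c : Fin n → ℝ) (j : Fin n) : lin c (Pi.single j 1) = c j := by
  classical
  simp [lin_apply, Pi.single_apply, mul_ite]

lemma diffAt_prod {ι : Type*} [DecidableEq ι] (s : Finset ι)
    (f : ι → (Fin n → ℝ) → ℝ) {x : Fin n → ℝ} (h : ∀ i ∈ s, DifferentiableAt ℝ (f i) x) :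
    DifferentiableAt ℝ (fun y => ∏ i ∈ s, f i y) x := by
  classical
  induction s using Finset.induction with
  | empty => simpa using differentiableAt_const (1 : ℝ)
  | @insert a s ha ih =>
    simp only [Finset.prod_insert ha]
    exact (h a (Finset.mem_insert_self _ _)).mul
      (ih fun i hi => h i (Finset.mem_insert_of_mem hi))

lemma diffAt_det {m : ℕ} {M : (Fin n → ℝ) → Matrix (Fin m) (Fin m) ℝ} {x : Fin n → ℝ}
    (h : ∀ i j, DifferentiableAt ℝ (fun y => M y i j) x) :
    DifferentiableAt ℝ (fun y => (M y).det) x := by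
  classical
  simp only [Matrix.det_apply']
  exact DifferentiableAt.fun_sum fun σ _ =>
    (diffAt_prod Finset.univ _ fun i _ => h (σ i) i).const_mul _

end Stmt4Aux

open Complex Finset



/-- Partial derivative of `f` in the `j`-th coordinate direction at `x`. -/
noncomputable def pd {n : ℕ} (f : (Fin n → ℝ) → ℝ) (j : Fin n) (x : Fin n → ℝ) : ℝ :=
  fderiv ℝ f x (Pi.single j 1)

/-- Partial derivative in the `i`-th action (`x`) direction of a complex-valued function
on action-angle coordinates `(x, t)`. -/
noncomputable def pdx {n : ℕ} (f : (Fin n → ℝ) × (Fin n → ℝ) → ℂ) (i : Fin n)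
    (p : (Fin n → ℝ) × (Fin n → ℝ)) : ℂ :=
  fderiv ℝ f p (Pi.single i 1, 0)

/-- Partial derivative in the `i`-th angle (`t`) direction of a complex-valued function
on action-angle coordinates `(x, t)`. -/
noncomputable def pdt {n : ℕ} (f : (Fin n → ℝ) × (Fin n → ℝ) → ℂ) (i : Fin n)
    (p : (Fin n → ℝ) × (Fin n → ℝ)) : ℂ :=
  fderiv ℝ f p (0, Pi.single i 1)

/-- The complex weighted toric Laplacian `𝔏` in action-angle coordinates. -/
noncomputable def Lop {n : ℕ} (H G : (Fin n → ℝ) → Matrix (Fin n) (Fin n) ℝ)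
    (a : Fin n → ℝ) (u : (Fin n → ℝ) × (Fin n → ℝ) → ℂ)
    (p : (Fin n → ℝ) × (Fin n → ℝ)) : ℂ :=
  -(∑ i, ∑ j, pdx (fun q => (H q.1 i j : ℂ) * pdx u j q) i p)
    - (∑ i, ∑ j, (G p.1 i j : ℂ) * pdt (fun q => pdt u j q) i p)
    + 2 * ∑ i, ∑ j, (a i : ℂ) * (H p.1 i j : ℂ) * pdx u j p
    - 2 * Complex.I * ∑ j, (a j : ℂ) * pdt u j p

set_option maxHeartbeats 1000000 in
/-- Conjugate root functions: under the same soliton hypotheses, the function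
`v(x,t) = (⟨x,b⟩ + 1)·exp(-⟨α,∇φ(x)⟩ - √-1⟨α,t⟩)` satisfies `𝔏 v = (2 - 4⟨α,a⟩) v`. -/
theorem stmt4 {n : ℕ} (U : Set (Fin n → ℝ)) (hUopen : IsOpen U)
    (φ : (Fin n → ℝ) → ℝ) (hφ : ContDiffOn ℝ (⊤ : ℕ∞) φ U)
    (G H : (Fin n → ℝ) → Matrix (Fin n) (Fin n) ℝ)
    (hG : ∀ x, G x = Matrix.of fun i j => pd (fun y => pd φ j y) i x)
    (hGinv : ∀ x ∈ U, IsUnit (G x))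
    (hH : ∀ x, H x = (G x)⁻¹)
    (a α b : Fin n → ℝ)
    (hαb : ∑ i, α i * b i = 1)
    (hsoliton : ∀ x ∈ U,
      -(∑ i, ∑ j, pd (fun y => H y i j * b j) i x) + 2 * ∑ i, ∑ j, a i * H x i j * b j
        = 2 * ∑ i, x i * b i)
    (v : (Fin n → ℝ) × (Fin n → ℝ) → ℂ)
    (hv : ∀ p : (Fin n → ℝ) × (Fin n → ℝ),
      v p = (((∑ i, p.1 i * b i) + 1 : ℝ) : ℂ)
        * Complex.exp (-((∑ i, α i * pd φ i p.1 : ℝ) : ℂ)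
            - Complex.I * ((∑ i, α i * p.2 i : ℝ) : ℂ))) :
    ∀ p : (Fin n → ℝ) × (Fin n → ℝ), p.1 ∈ U →
      Lop H G a v p = ((2 - 4 * ∑ i, α i * a i : ℝ) : ℂ) * v p := by
  classical
  open Stmt4Aux Complex Finset in
  intro p hp
  -- ### Part 1: smoothness facts about φ, G, H
  have hCD : ∀ x ∈ U, ContDiffAt ℝ (⊤ : ℕ∞) φ x := fun x hx => hφ.contDiffAt (hUopen.mem_nhds hx)
  have hF1 : ∀ x ∈ U, ContDiffAt ℝ (⊤ : ℕ∞) (fderiv ℝ φ) x := fun x hx => (hCD x hx).fderiv_right (by simp)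
  set B : (Fin n → ℝ) → ((Fin n → ℝ) →L[ℝ] (Fin n → ℝ) →L[ℝ] ℝ) := fderiv ℝ (fderiv ℝ φ) with hB
  have hBx : ∀ x ∈ U, HasFDerivAt (fderiv ℝ φ) (B x) x := fun x hx =>
    ((hF1 x hx).differentiableAt (by simp)).hasFDerivAt
  have hpdφ : ∀ (k : Fin n) (x), x ∈ U →
      HasFDerivAt (fun y => pd φ k y) ((B x).flip (Pi.single k 1)) x := by
    intro k x hx
    have h := (hBx x hx).clm_apply (hasFDerivAt_const (Pi.single k (1:ℝ)) x)
    simpa [pd] using h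
  have hGval : ∀ x ∈ U, ∀ i j, G x i j = B x (Pi.single i 1) (Pi.single j 1) := by
    intro x hx i j
    rw [hG]
    show pd (fun y => pd φ j y) i x = _
    rw [pd, (hpdφ j x hx).fderiv]
    simp
  have hGsym : ∀ x ∈ U, ∀ i j, G x i j = G x j i := by
    intro x hx i j
    have hev : ∀ᶠ y in nhds x, HasFDerivAt φ (fderiv ℝ φ y) y := by
      filter_upwards [hUopen.mem_nhds hx] with y hy
      exact ((hCD y hy).differentiableAt (by simp)).hasFDerivAt
    have h2 := second_derivative_symmetric_of_eventually hev (hBx x hx)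
      (Pi.single i 1) (Pi.single j 1)
    rw [hGval x hx i j, hGval x hx j i]
    exact h2
  have hF2 : ∀ x ∈ U, ContDiffAt ℝ (⊤ : ℕ∞) B x := fun x hx => (hF1 x hx).fderiv_right (by simp)
  have hGdiffAt : ∀ x ∈ U, ∀ i j, DifferentiableAt ℝ (fun y => G y i j) x := by
    intro x hx i j
    have hBd : DifferentiableAt ℝ B x := (hF2 x hx).differentiableAt (by simp)
    have h1 : DifferentiableAt ℝ (fun y => B y (Pi.single i 1) (Pi.single j 1)) x :=
      (hBd.clm_apply (differentiableAt_const _)).clm_apply (differentiableAt_const _)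
    apply h1.congr_of_eventuallyEq
    filter_upwards [hUopen.mem_nhds hx] with y hy
    exact hGval y hy i j
  have hdet_ne : ∀ x ∈ U, (G x).det ≠ 0 := fun x hx =>
    IsUnit.ne_zero ((Matrix.isUnit_iff_isUnit_det _).mp (hGinv x hx))
  have hHentry : ∀ (x) (i j : Fin n), H x i j = ((G x).det)⁻¹ * (G x).adjugate i j := by
    intro x i j
    rw [hH, Matrix.inv_def, Ring.inverse_eq_inv]
    simp [Matrix.smul_apply]
  have hHdiffAt : ∀ x ∈ U, ∀ i j, DifferentiableAt ℝ (fun y => H y i j) x := by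
    intro x hx i j
    have hdet : DifferentiableAt ℝ (fun y => (G y).det) x :=
      diffAt_det (fun i j => hGdiffAt x hx i j)
    have hadj : DifferentiableAt ℝ (fun y => (G y).adjugate i j) x := by
      have he : ∀ y, (G y).adjugate i j = ((G y).updateRow j (Pi.single i 1)).det := fun y =>
        Matrix.adjugate_apply _ _ _
      simp only [he]
      refine diffAt_det fun k l => ?_
      rcases eq_or_ne k j with rfl | hkj
      · simp only [Matrix.updateRow_apply, if_pos rfl]
        exact differentiableAt_const _
      · simp only [Matrix.updateRow_apply, if_neg hkj]
        exact hGdiffAt x hx k l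
    have h3 : DifferentiableAt ℝ (fun y => ((G y).det)⁻¹ * (G y).adjugate i j) x :=
      (hdet.inv (hdet_ne x hx)).mul hadj
    exact h3.congr_of_eventuallyEq (Filter.Eventually.of_forall fun y => hHentry y i j)
  -- ### Part 2: basic functions and their derivatives
  set x₀ : Fin n → ℝ := p.1 with hx₀
  set Lf : (Fin n → ℝ) → ℝ := fun x => (∑ i, x i * b i) + 1 with hLf_def
  set gf : (Fin n → ℝ) → ℝ := fun t => ∑ i, α i * t i with hgf_def
  set ff : (Fin n → ℝ) → ℝ := fun x => ∑ i, α i * pd φ i x with hff_def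
  set Af : Fin n → (Fin n → ℝ) → ℝ := fun j x => ∑ k, α k * G x j k with hAf_def
  set hfn : Fin n → (Fin n → ℝ) → ℝ := fun i x => ∑ j, H x i j * b j with hhfn_def
  have hLfd : ∀ x, HasFDerivAt Lf (lin b) x := by
    intro x
    refine ((lin b).hasFDerivAt.add_const 1).congr_of_eventuallyEq ?_
    exact Filter.Eventually.of_forall fun y => by
      simp [hLf_def, lin_apply, mul_comm]
  have hgd : ∀ t, HasFDerivAt gf (lin α) t := by
    intro t
    refine (lin α).hasFDerivAt.congr_of_eventuallyEq ?_
    exact Filter.Eventually.of_forall fun y => by simp [hgf_def, lin_apply]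
  set Df : (Fin n → ℝ) → ((Fin n → ℝ) →L[ℝ] ℝ) :=
    fun x => ∑ k, α k • (B x).flip (Pi.single k 1) with hDf_def
  have hffd : ∀ x ∈ U, HasFDerivAt ff (Df x) x := by
    intro x hx
    exact HasFDerivAt.fun_sum fun k _ => ((hpdφ k x hx).const_mul (α k))
  have hDf_eval : ∀ x ∈ U, ∀ j, Df x (Pi.single j 1) = Af j x := by
    intro x hx j
    simp only [hDf_def, hAf_def, ContinuousLinearMap.coe_sum', Finset.sum_apply,
      ContinuousLinearMap.coe_smul', Pi.smul_apply, ContinuousLinearMap.flip_apply,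
      smul_eq_mul]
    exact Finset.sum_congr rfl fun k _ => by rw [← hGval x hx j k]
  -- ### Part 3: the function v and its derivative
  set ψ : (Fin n → ℝ) × (Fin n → ℝ) → ℂ :=
    fun q => -((ff q.1 : ℝ) : ℂ) - Complex.I * ((gf q.2 : ℝ) : ℂ) with hψ_def
  have hveq : ∀ q, v q = ((Lf q.1 : ℝ) : ℂ) * Complex.exp (ψ q) := fun q => by
    rw [hv q]
  set fstL : ((Fin n → ℝ) × (Fin n → ℝ)) →L[ℝ] (Fin n → ℝ) :=
    ContinuousLinearMap.fst ℝ (Fin n → ℝ) (Fin n → ℝ) with hfstL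
  set sndL : ((Fin n → ℝ) × (Fin n → ℝ)) →L[ℝ] (Fin n → ℝ) :=
    ContinuousLinearMap.snd ℝ (Fin n → ℝ) (Fin n → ℝ) with hsndL
  set Dψ : (Fin n → ℝ) × (Fin n → ℝ) → (((Fin n → ℝ) × (Fin n → ℝ)) →L[ℝ] ℂ) := fun q =>
    -(Complex.ofRealCLM.comp ((Df q.1).comp fstL))
      - Complex.I • (Complex.ofRealCLM.comp ((lin α).comp sndL)) with hDψ_def
  have hψd : ∀ q : (Fin n → ℝ) × (Fin n → ℝ), q.1 ∈ U → HasFDerivAt ψ (Dψ q) q := by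
    intro q hq
    have h1 : HasFDerivAt (fun q : (Fin n → ℝ) × (Fin n → ℝ) => ff q.1)
        ((Df q.1).comp fstL) q := (hffd q.1 hq).comp q hasFDerivAt_fst
    have h1c : HasFDerivAt (fun q : (Fin n → ℝ) × (Fin n → ℝ) => ((ff q.1 : ℝ) : ℂ))
        (Complex.ofRealCLM.comp ((Df q.1).comp fstL)) q :=
      Complex.ofRealCLM.hasFDerivAt.comp q h1
    have h2 : HasFDerivAt (fun q : (Fin n → ℝ) × (Fin n → ℝ) => gf q.2)
        ((lin α).comp sndL) q := (hgd q.2).comp q hasFDerivAt_snd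
    have h2c : HasFDerivAt (fun q : (Fin n → ℝ) × (Fin n → ℝ) => ((gf q.2 : ℝ) : ℂ))
        (Complex.ofRealCLM.comp ((lin α).comp sndL)) q :=
      Complex.ofRealCLM.hasFDerivAt.comp q h2
    exact h1c.neg.sub (h2c.const_mul Complex.I)
  set DL : (((Fin n → ℝ) × (Fin n → ℝ)) →L[ℝ] ℂ) :=
    Complex.ofRealCLM.comp ((lin b).comp fstL) with hDL_def
  have hLc : ∀ q : (Fin n → ℝ) × (Fin n → ℝ),
      HasFDerivAt (fun q : (Fin n → ℝ) × (Fin n → ℝ) => ((Lf q.1 : ℝ) : ℂ)) DL q := fun q =>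
    Complex.ofRealCLM.hasFDerivAt.comp q ((hLfd q.1).comp q hasFDerivAt_fst)
  have hvd : ∀ q : (Fin n → ℝ) × (Fin n → ℝ), q.1 ∈ U → HasFDerivAt v
      (((Lf q.1 : ℝ) : ℂ) • (Complex.exp (ψ q) • Dψ q) + Complex.exp (ψ q) • DL) q := by
    intro q hq
    have hEexp : HasFDerivAt (fun q' => Complex.exp (ψ q')) (Complex.exp (ψ q) • Dψ q) q :=
      (hψd q hq).cexp
    have hmul := (hLc q).mul hEexp
    exact hmul.congr_of_eventuallyEq (Filter.Eventually.of_forall fun q' => hveq q')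
  have hSmem : ∀ q : (Fin n → ℝ) × (Fin n → ℝ), q.1 ∈ U →
      {q' : (Fin n → ℝ) × (Fin n → ℝ) | q'.1 ∈ U} ∈ nhds q := fun q hq =>
    (hUopen.preimage continuous_fst).mem_nhds hq
  have hDψx : ∀ q : (Fin n → ℝ) × (Fin n → ℝ), q.1 ∈ U → ∀ j,
      Dψ q (Pi.single j 1, 0) = -((Af j q.1 : ℝ) : ℂ) := by
    intro q hq j
    simp [hDψ_def, hfstL, hsndL, hDf_eval q.1 hq j]
  have hDψt : ∀ (q : (Fin n → ℝ) × (Fin n → ℝ)) (j),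
      Dψ q ((0 : Fin n → ℝ), Pi.single j 1) = -(Complex.I * ((α j : ℝ) : ℂ)) := by
    intro q j
    simp [hDψ_def, hfstL, hsndL, lin, Pi.single_apply, apply_ite (Complex.ofReal),
      mul_ite, Finset.sum_ite_eq']
  have hDLx : ∀ j : Fin n, DL (Pi.single j 1, 0) = ((b j : ℝ) : ℂ) := by
    intro j
    simp [hDL_def, hfstL, lin, Pi.single_apply, apply_ite (Complex.ofReal),
      mul_ite, Finset.sum_ite_eq']
  have hDLt : ∀ j : Fin n, DL ((0 : Fin n → ℝ), Pi.single j 1) = 0 := by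
    intro j
    simp [hDL_def, hfstL, lin, Pi.single_apply, apply_ite (Complex.ofReal),
      mul_ite, Finset.sum_ite_eq']
  set P : Fin n → ((Fin n → ℝ) × (Fin n → ℝ)) → ℂ := fun j q =>
    (((b j : ℝ) : ℂ) - ((Lf q.1 : ℝ) : ℂ) * ((Af j q.1 : ℝ) : ℂ)) * Complex.exp (ψ q)
    with hP_def
  have hpdx : ∀ q : (Fin n → ℝ) × (Fin n → ℝ), q.1 ∈ U → ∀ j, pdx v j q = P j q := by
    intro q hq j
    rw [pdx, (hvd q hq).fderiv]
    simp only [ContinuousLinearMap.add_apply, ContinuousLinearMap.coe_smul', Pi.smul_apply,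
      smul_eq_mul, hDψx q hq j, hDLx j, hP_def]
    ring
  have hpdt : ∀ q : (Fin n → ℝ) × (Fin n → ℝ), q.1 ∈ U → ∀ j,
      pdt v j q = -(Complex.I * ((α j : ℝ) : ℂ)) * v q := by
    intro q hq j
    rw [pdt, (hvd q hq).fderiv]
    simp only [ContinuousLinearMap.add_apply, ContinuousLinearMap.coe_smul', Pi.smul_apply,
      smul_eq_mul, hDψt q j, hDLt j, hveq q]
    ring
  -- ### Part 4: matrix identities
  have hHG1 : ∀ x ∈ U, H x * G x = 1 := fun x hx => by
    rw [hH]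
    exact Matrix.nonsing_inv_mul _ ((Matrix.isUnit_iff_isUnit_det _).mp (hGinv x hx))
  have hGH1 : ∀ x ∈ U, G x * H x = 1 := fun x hx => by
    rw [hH]
    exact Matrix.mul_nonsing_inv _ ((Matrix.isUnit_iff_isUnit_det _).mp (hGinv x hx))
  have hR1 : ∀ x ∈ U, ∀ i, ∑ j, H x i j * Af j x = α i := by
    intro x hx i
    calc ∑ j, H x i j * Af j x = ∑ j, ∑ k, α k * (H x i j * G x j k) := by
          refine Finset.sum_congr rfl fun j _ => ?_
          rw [hAf_def, Finset.mul_sum]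
          exact Finset.sum_congr rfl fun k _ => by ring
      _ = ∑ k, α k * ∑ j, H x i j * G x j k := by
          rw [Finset.sum_comm]
          exact Finset.sum_congr rfl fun k _ => (Finset.mul_sum _ _ _).symm
      _ = ∑ k, α k * (1 : Matrix (Fin n) (Fin n) ℝ) i k := by
          refine Finset.sum_congr rfl fun k _ => ?_
          rw [← hHG1 x hx, Matrix.mul_apply]
      _ = α i := by simp [Matrix.one_apply]
  have hR3 : ∑ i, hfn i x₀ * Af i x₀ = 1 := by
    calc ∑ i, hfn i x₀ * Af i x₀
        = ∑ i, ∑ j, ∑ k, b j * α k * (G x₀ k i * H x₀ i j) := by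
          refine Finset.sum_congr rfl fun i _ => ?_
          rw [hhfn_def, hAf_def, Finset.sum_mul_sum]
          exact Finset.sum_congr rfl fun j _ => Finset.sum_congr rfl fun k _ => by
            rw [hGsym x₀ hp i k]; ring
      _ = ∑ j, ∑ k, b j * α k * ∑ i, G x₀ k i * H x₀ i j := by
          rw [Finset.sum_comm]
          refine Finset.sum_congr rfl fun j _ => ?_
          rw [Finset.sum_comm]
          exact Finset.sum_congr rfl fun k _ => (Finset.mul_sum _ _ _).symm
      _ = ∑ j, ∑ k, b j * α k * (1 : Matrix (Fin n) (Fin n) ℝ) k j := by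
          refine Finset.sum_congr rfl fun j _ => Finset.sum_congr rfl fun k _ => ?_
          rw [← hGH1 x₀ hp, Matrix.mul_apply]
      _ = 1 := by
          rw [← hαb]
          rw [Finset.sum_comm]
          refine Finset.sum_congr rfl fun k _ => ?_
          simp [Matrix.one_apply, mul_comm]
  -- ### Part 5: derivative of hfn and the soliton equation
  set DH : Fin n → Fin n → ((Fin n → ℝ) →L[ℝ] ℝ) :=
    fun i j => fderiv ℝ (fun x => H x i j) x₀ with hDH_def
  have hDHd : ∀ i j, HasFDerivAt (fun x => H x i j) (DH i j) x₀ :=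
    fun i j => (hHdiffAt x₀ hp i j).hasFDerivAt
  set Dh : Fin n → ((Fin n → ℝ) →L[ℝ] ℝ) := fun i => ∑ j, b j • DH i j with hDh_def
  have hhd : ∀ i, HasFDerivAt (hfn i) (Dh i) x₀ := by
    intro i
    exact HasFDerivAt.fun_sum fun j _ => (hDHd i j).mul_const (b j)
  have hsol2 : -(∑ i, Dh i (Pi.single i 1)) + 2 * ∑ i, ∑ j, a i * H x₀ i j * b j
      = 2 * (Lf x₀ - 1) := by
    have e1 : ∀ i, Dh i (Pi.single i 1) = ∑ j, pd (fun y => H y i j * b j) i x₀ := by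
      intro i
      rw [hDh_def]
      simp only [ContinuousLinearMap.coe_sum', Finset.sum_apply,
        ContinuousLinearMap.coe_smul', Pi.smul_apply, smul_eq_mul]
      refine Finset.sum_congr rfl fun j _ => ?_
      rw [pd, ((hDHd i j).mul_const (b j)).fderiv]
      simp [mul_comm]
    have e2 : Lf x₀ - 1 = ∑ i, x₀ i * b i := by simp [hLf_def]
    rw [e2, Finset.sum_congr rfl fun i _ => e1 i]
    exact hsoliton x₀ hp
  -- ### Part 6: the four terms
  have key : ∀ (c : Fin n → ℝ) (w : ℂ), ∑ i, (c i : ℂ) * w = ((∑ i, c i : ℝ) : ℂ) * w := by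
    intro c w
    rw [← Finset.sum_mul]
    norm_cast
  -- Term 1
  set Fi : Fin n → ((Fin n → ℝ) × (Fin n → ℝ)) → ℂ := fun i q =>
    (((hfn i q.1 : ℝ) : ℂ) - ((Lf q.1 : ℝ) : ℂ) * ((α i : ℝ) : ℂ)) * Complex.exp (ψ q)
    with hFi_def
  have hsumP : ∀ q : (Fin n → ℝ) × (Fin n → ℝ), q.1 ∈ U → ∀ i,
      ∑ j, ((H q.1 i j : ℝ) : ℂ) * P j q = Fi i q := by
    intro q hq i
    have h2 : ∑ j, H q.1 i j * (Lf q.1 * Af j q.1) = Lf q.1 * ∑ j, H q.1 i j * Af j q.1 := by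
      rw [Finset.mul_sum]
      exact Finset.sum_congr rfl fun j _ => by ring
    have real1 : ∑ j, H q.1 i j * (b j - Lf q.1 * Af j q.1) = hfn i q.1 - Lf q.1 * α i := by
      simp only [mul_sub]
      rw [Finset.sum_sub_distrib, h2, hR1 q.1 hq i]
    calc ∑ j, ((H q.1 i j : ℝ) : ℂ) * P j q
        = ∑ j, ((H q.1 i j * (b j - Lf q.1 * Af j q.1) : ℝ) : ℂ) * Complex.exp (ψ q) := by
          refine Finset.sum_congr rfl fun j _ => ?_
          rw [hP_def]
          push_cast
          ring
      _ = ((∑ j, H q.1 i j * (b j - Lf q.1 * Af j q.1) : ℝ) : ℂ) * Complex.exp (ψ q) :=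
          key _ _
      _ = Fi i q := by rw [real1, hFi_def]; push_cast; ring
  have hEexpd : HasFDerivAt (fun q' => Complex.exp (ψ q')) (Complex.exp (ψ p) • Dψ p) p :=
    (hψd p hp).cexp
  have hTdiff : ∀ i j, DifferentiableAt ℝ
      (fun q : (Fin n → ℝ) × (Fin n → ℝ) => ((H q.1 i j : ℝ) : ℂ) * P j q) p := by
    intro i j
    have hHq : DifferentiableAt ℝ (fun q : (Fin n → ℝ) × (Fin n → ℝ) => ((H q.1 i j : ℝ) : ℂ)) p :=
      Complex.ofRealCLM.differentiableAt.comp p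
        ((hHdiffAt x₀ hp i j).comp (f := Prod.fst) p differentiableAt_fst)
    have hAx : DifferentiableAt ℝ (fun x => Af j x) x₀ := by
      rw [hAf_def]
      exact DifferentiableAt.fun_sum fun k _ => (hGdiffAt x₀ hp j k).const_mul (α k)
    have hAq : DifferentiableAt ℝ
        (fun q : (Fin n → ℝ) × (Fin n → ℝ) => ((Af j q.1 : ℝ) : ℂ)) p :=
      Complex.ofRealCLM.differentiableAt.comp p (hAx.comp (f := Prod.fst) p differentiableAt_fst)
    have hLq : DifferentiableAt ℝ
        (fun q : (Fin n → ℝ) × (Fin n → ℝ) => ((Lf q.1 : ℝ) : ℂ)) p :=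
      (hLc p).differentiableAt
    have hPd : DifferentiableAt ℝ (P j) p := by
      rw [hP_def]
      exact ((differentiableAt_const _).sub (hLq.mul hAq)).mul hEexpd.differentiableAt
    exact hHq.mul hPd
  have hFid : ∀ i, HasFDerivAt (Fi i)
      (((((hfn i x₀ : ℝ) : ℂ)) - ((Lf x₀ : ℝ) : ℂ) * ((α i : ℝ) : ℂ)) •
          (Complex.exp (ψ p) • Dψ p)
        + Complex.exp (ψ p) •
            (Complex.ofRealCLM.comp ((Dh i).comp fstL) - ((α i : ℝ) : ℂ) • DL)) p := by
    intro i
    have hhc : HasFDerivAt (fun q : (Fin n → ℝ) × (Fin n → ℝ) => ((hfn i q.1 : ℝ) : ℂ))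
        (Complex.ofRealCLM.comp ((Dh i).comp fstL)) p :=
      Complex.ofRealCLM.hasFDerivAt.comp p ((hhd i).comp (f := Prod.fst) p hasFDerivAt_fst)
    have h1 := hhc.sub ((hLc p).mul_const (((α i : ℝ) : ℂ)))
    exact h1.mul hEexpd
  have hterm1 : ∀ i, ∑ j, pdx (fun q => ((H q.1 i j : ℝ) : ℂ) * pdx v j q) i p
      = (fderiv ℝ (Fi i) p) (Pi.single i 1, 0) := by
    intro i
    have e1 : ∀ j, pdx (fun q => ((H q.1 i j : ℝ) : ℂ) * pdx v j q) i p
        = (fderiv ℝ (fun q => ((H q.1 i j : ℝ) : ℂ) * P j q) p) (Pi.single i 1, 0) := by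
      intro j
      rw [pdx]
      congr 1
      apply Filter.EventuallyEq.fderiv_eq
      filter_upwards [hSmem p hp] with q hq
      rw [hpdx q hq j]
    calc ∑ j, pdx (fun q => ((H q.1 i j : ℝ) : ℂ) * pdx v j q) i p
        = ∑ j, (fderiv ℝ (fun q => ((H q.1 i j : ℝ) : ℂ) * P j q) p) (Pi.single i 1, 0) :=
          Finset.sum_congr rfl fun j _ => e1 j
      _ = (∑ j, fderiv ℝ (fun q => ((H q.1 i j : ℝ) : ℂ) * P j q) p) (Pi.single i 1, 0) :=
          (ContinuousLinearMap.sum_apply _ _ _).symm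
      _ = (fderiv ℝ (fun q => ∑ j, ((H q.1 i j : ℝ) : ℂ) * P j q) p) (Pi.single i 1, 0) := by
          rw [fderiv_fun_sum (fun j _ => hTdiff i j)]
      _ = (fderiv ℝ (Fi i) p) (Pi.single i 1, 0) := by
          congr 1
          apply Filter.EventuallyEq.fderiv_eq
          filter_upwards [hSmem p hp] with q hq
          exact hsumP q hq i
  have hFi_eval : ∀ i, (fderiv ℝ (Fi i) p) (Pi.single i 1, 0)
      = (((hfn i x₀ : ℝ) : ℂ) - ((Lf x₀ : ℝ) : ℂ) * ((α i : ℝ) : ℂ)) *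
          (Complex.exp (ψ p) * (-((Af i x₀ : ℝ) : ℂ)))
        + Complex.exp (ψ p) * (((Dh i (Pi.single i 1) : ℝ) : ℂ)
            - ((α i : ℝ) : ℂ) * ((b i : ℝ) : ℂ)) := by
    intro i
    rw [(hFid i).fderiv]
    simp only [ContinuousLinearMap.add_apply, ContinuousLinearMap.coe_smul', Pi.smul_apply,
      smul_eq_mul, ContinuousLinearMap.coe_sub', Pi.sub_apply, ContinuousLinearMap.comp_apply,
      hDψx p hp i, hDLx i, hfstL, ContinuousLinearMap.coe_fst', Complex.ofRealCLM_apply]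
    rfl
  -- Term 2
  have hpdt2 : ∀ i j, pdt (fun q => pdt v j q) i p
      = -(((α i : ℝ) : ℂ) * ((α j : ℝ) : ℂ)) * v p := by
    intro i j
    have hev : (fun q => pdt v j q) =ᶠ[nhds p]
        fun q => -(Complex.I * ((α j : ℝ) : ℂ)) * v q := by
      filter_upwards [hSmem p hp] with q hq
      exact hpdt q hq j
    rw [pdt, hev.fderiv_eq, ((hvd p hp).const_mul (-(Complex.I * ((α j : ℝ) : ℂ)))).fderiv]
    simp only [ContinuousLinearMap.coe_smul', Pi.smul_apply, ContinuousLinearMap.add_apply,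
      smul_eq_mul, hDψt p i, hDLt i, hveq p]
    linear_combination (((α i : ℝ) : ℂ) * ((α j : ℝ) : ℂ) * ((Lf p.1 : ℝ) : ℂ)
      * Complex.exp (ψ p)) * Complex.I_mul_I
  -- ### Part 7: assembling the four terms
  set Ep : ℂ := Complex.exp (ψ p) with hEp_def
  set Dd : ℝ := ∑ i, Dh i (Pi.single i 1) with hDd_def
  set Qr : ℝ := ∑ i, α i * Af i x₀ with hQr_def
  set T3 : ℝ := ∑ i, ∑ j, a i * H x₀ i j * b j with hT3_def
  set Sa : ℝ := ∑ i, a i * α i with hSa_def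
  have hafeq : ∀ i, (∑ j, α j * G x₀ i j) = Af i x₀ := fun i => rfl
  have t1 : ∑ i, ∑ j, pdx (fun q => ((H q.1 i j : ℝ) : ℂ) * pdx v j q) i p
      = ((Dd - 2 + Lf x₀ * Qr : ℝ) : ℂ) * Ep := by
    have real2 : ∑ i, ((hfn i x₀ - Lf x₀ * α i) * (-(Af i x₀)) + (Dh i (Pi.single i 1) - α i * b i))
        = Dd - 2 + Lf x₀ * Qr := by
      have ex : ∀ i : Fin n,
          (hfn i x₀ - Lf x₀ * α i) * (-(Af i x₀)) + (Dh i (Pi.single i 1) - α i * b i)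
          = -(hfn i x₀ * Af i x₀) + Lf x₀ * (α i * Af i x₀) + Dh i (Pi.single i 1) - α i * b i :=
        fun i => by ring
      rw [Finset.sum_congr rfl fun i _ => ex i, Finset.sum_sub_distrib,
        Finset.sum_add_distrib, Finset.sum_add_distrib, Finset.sum_neg_distrib,
        ← Finset.mul_sum, hR3, hαb, hDd_def, hQr_def]
      ring
    calc ∑ i, ∑ j, pdx (fun q => ((H q.1 i j : ℝ) : ℂ) * pdx v j q) i p
        = ∑ i, (((hfn i x₀ - Lf x₀ * α i) * (-(Af i x₀))
            + (Dh i (Pi.single i 1) - α i * b i) : ℝ) : ℂ) * Ep := by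
          refine Finset.sum_congr rfl fun i _ => ?_
          rw [hterm1 i, hFi_eval i]
          push_cast
          ring
      _ = ((∑ i, ((hfn i x₀ - Lf x₀ * α i) * (-(Af i x₀))
            + (Dh i (Pi.single i 1) - α i * b i)) : ℝ) : ℂ) * Ep := key _ _
      _ = ((Dd - 2 + Lf x₀ * Qr : ℝ) : ℂ) * Ep := by rw [real2]
  have t2 : ∑ i, ∑ j, ((G x₀ i j : ℝ) : ℂ) * pdt (fun q => pdt v j q) i p
      = -(((Lf x₀ * Qr : ℝ) : ℂ) * Ep) := by
    have inner : ∀ i, ∑ j, ((G x₀ i j : ℝ) : ℂ) * pdt (fun q => pdt v j q) i p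
        = ((α i * Af i x₀ : ℝ) : ℂ) * (-(((Lf x₀ : ℝ) : ℂ) * Ep)) := by
      intro i
      calc ∑ j, ((G x₀ i j : ℝ) : ℂ) * pdt (fun q => pdt v j q) i p
          = ∑ j, ((α j * G x₀ i j : ℝ) : ℂ) * (((α i : ℝ) : ℂ) * (-(((Lf x₀ : ℝ) : ℂ) * Ep))) := by
            refine Finset.sum_congr rfl fun j _ => ?_
            rw [hpdt2 i j, hveq p, ← hx₀]
            push_cast
            ring
        _ = ((∑ j, α j * G x₀ i j : ℝ) : ℂ) * (((α i : ℝ) : ℂ) * (-(((Lf x₀ : ℝ) : ℂ) * Ep))) :=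
            key _ _
        _ = ((α i * Af i x₀ : ℝ) : ℂ) * (-(((Lf x₀ : ℝ) : ℂ) * Ep)) := by
            rw [hafeq i]
            push_cast
            ring
    rw [Finset.sum_congr rfl fun i _ => inner i, key]
    rw [hQr_def]
    push_cast
    ring
  have t3 : ∑ i, ∑ j, ((a i : ℝ) : ℂ) * ((H x₀ i j : ℝ) : ℂ) * pdx v j p
      = ((T3 - Lf x₀ * Sa : ℝ) : ℂ) * Ep := by
    have inner : ∀ i, ∑ j, ((a i : ℝ) : ℂ) * ((H x₀ i j : ℝ) : ℂ) * pdx v j p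
        = ((∑ j, a i * H x₀ i j * b j) - Lf x₀ * (a i * α i) : ℝ) * Ep := by
      intro i
      have real3 : ∑ j, (a i * (H x₀ i j * b j) - Lf x₀ * (a i * (H x₀ i j * Af j x₀)))
          = (∑ j, a i * H x₀ i j * b j) - Lf x₀ * (a i * α i) := by
        rw [Finset.sum_sub_distrib]
        congr 1
        · exact Finset.sum_congr rfl fun j _ => by ring
        · rw [← Finset.mul_sum, ← Finset.mul_sum, hR1 x₀ hp i]
      calc ∑ j, ((a i : ℝ) : ℂ) * ((H x₀ i j : ℝ) : ℂ) * pdx v j p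
          = ∑ j, ((a i * (H x₀ i j * b j) - Lf x₀ * (a i * (H x₀ i j * Af j x₀)) : ℝ) : ℂ)
              * Ep := by
            refine Finset.sum_congr rfl fun j _ => ?_
            rw [hpdx p hp j]
            simp only [hP_def]
            rw [← hx₀]
            push_cast
            ring
        _ = ((∑ j, (a i * (H x₀ i j * b j) - Lf x₀ * (a i * (H x₀ i j * Af j x₀))) : ℝ) : ℂ)
              * Ep := key _ _
        _ = ((∑ j, a i * H x₀ i j * b j) - Lf x₀ * (a i * α i) : ℝ) * Ep := by rw [real3]
    rw [Finset.sum_congr rfl fun i _ => inner i, key]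
    have real4 : ∑ i, ((∑ j, a i * H x₀ i j * b j) - Lf x₀ * (a i * α i)) = T3 - Lf x₀ * Sa := by
      rw [Finset.sum_sub_distrib, ← Finset.mul_sum, hT3_def, hSa_def]
    rw [real4]
  have t4 : ∑ j, ((a j : ℝ) : ℂ) * pdt v j p
      = ((Sa : ℝ) : ℂ) * (-(Complex.I * (((Lf x₀ : ℝ) : ℂ) * Ep))) := by
    calc ∑ j, ((a j : ℝ) : ℂ) * pdt v j p
        = ∑ j, ((a j * α j : ℝ) : ℂ) * (-(Complex.I * (((Lf x₀ : ℝ) : ℂ) * Ep))) := by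
          refine Finset.sum_congr rfl fun j _ => ?_
          rw [hpdt p hp j, hveq p, ← hx₀]
          push_cast
          ring
      _ = ((∑ j, a j * α j : ℝ) : ℂ) * (-(Complex.I * (((Lf x₀ : ℝ) : ℂ) * Ep))) := key _ _
      _ = ((Sa : ℝ) : ℂ) * (-(Complex.I * (((Lf x₀ : ℝ) : ℂ) * Ep))) := by rw [hSa_def]
  -- ### Part 8: final algebra
  have hSa' : (∑ i, α i * a i) = Sa := by
    rw [hSa_def]
    exact Finset.sum_congr rfl fun i _ => by ring
  have hsolC : ((-Dd + 2 * T3 : ℝ) : ℂ) = ((2 * (Lf x₀ - 1) : ℝ) : ℂ) := by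
    rw [hDd_def, hT3_def]
    exact_mod_cast congrArg Complex.ofReal hsol2
  simp only [Lop, ← hx₀]
  rw [t1, t2, t3, t4, hveq p, ← hx₀, hSa']
  push_cast
  push_cast at hsolC
  linear_combination Ep * hsolC
    + (2 * ((Sa : ℝ) : ℂ) * ((Lf x₀ : ℝ) : ℂ) * Ep) * Complex.I_mul_I
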